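/- Let n ∈ ℕ, let f : (Fin n → Bool) → Bool, let I ⊆ Fin n be a nonempty finite set, and let k ∈ I. Then the minimum, over orderings σ of I whose last element is k (i.e. σ(|I|−1) = k), of ∑_{j=0}^{|I|−1} w(σ({0,…,j}), σ(j)) equals MC(I∖{k}) + w(I,k). -/

import Mathlib

open Finset

def restrict (n : ℕ) (f : (Fin n → Bool) → Bool) (S : Finset (Fin n)) (b : Fin n → Bool) :
    (Fin n → Bool) → Bool :=
  fun x => f fun i => if i ∈ S then b i else x i

def EssDependsOn (n : ℕ) (g : (Fin n → Bool) → Bool) (i : Fin n) : Prop :=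
  ∃ x : Fin n → Bool, g x ≠ g (Function.update x i (!x i))

noncomputable def width (n : ℕ) (f : (Fin n → Bool) → Bool) (I : Finset (Fin n)) (i : Fin n) : ℕ :=
  Set.ncard {g : (Fin n → Bool) → Bool | EssDependsOn n g i ∧ ∃ b, g = restrict n f Iᶜ b}

noncomputable def RC (n : ℕ) (f : (Fin n → Bool) → Bool) (B J : Finset (Fin n)) : ℕ :=
  sInf { c | ∃ σ : Fin J.card ≃ {j // j ∈ J},
    c = ∑ j : Fin J.card,
          width n f (B ∪ (Finset.Iic j).image (fun t => ((σ t : {j // j ∈ J}) : Fin n))) (σ j) }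

noncomputable def MC (n : ℕ) (f : (Fin n → Bool) → Bool) (I : Finset (Fin n)) : ℕ :=
  RC n f ∅ I

/-!
If `k` is read last, the bottom `|I| - 1` levels form an ordering of `I \ {k}` whose cost is
unaffected by `k`, while the top level contributes `w(I, k)`, since its prefix is all of `I`.
Orderings of `I` ending in `k` therefore correspond to orderings of `I \ {k}` (drop or append
`k`), with costs shifted by `w(I, k)`, and the minima shift accordingly.
-/

lemma Nat.sInf_image_add_right {S : Set ℕ} (hS : S.Nonempty) (w : ℕ) :
    sInf ((· + w) '' S) = sInf S + w :=
  (Monotone.map_csInf_of_continuousAt (continuous_of_discreteTopology.continuousAt)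
    (monotone_id.add_const w) hS (OrderBot.bddBelow S)).symm

lemma Finset.image_univ_eq_of_injective {α : Type*} [DecidableEq α] {m : ℕ} {J : Finset α}
    {e : Fin m → α} (he : Function.Injective e) (hJ : ∀ j, e j ∈ J) (hm : J.card ≤ m) :
    univ.image e = J :=
  eq_of_subset_of_card_le (fun _ hx => by obtain ⟨j, -, rfl⟩ := mem_image.1 hx; exact hJ j)
    (by rwa [card_image_of_injective _ he, card_univ, Fintype.card_fin])

lemma Finset.exists_equiv_val_eq {α : Type*} {J : Finset α} (e : Fin J.card → α)
    (he : Function.Injective e) (hJ : ∀ j, e j ∈ J) :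
    ∃ σ : Fin J.card ≃ J, ∀ j, (σ j : α) = e j :=
  ⟨Equiv.ofBijective (fun j => ⟨e j, hJ j⟩) <|
    (Fintype.bijective_iff_injective_and_card _).2
      ⟨fun _ _ h => he (congrArg Subtype.val h), by simp⟩, fun _ => rfl⟩

section Orderings

variable (n : ℕ) (f : (Fin n → Bool) → Bool)

/-- `e j` is the variable read at level `j`, counted from the bottom of the diagram. -/
noncomputable def orderCost {m : ℕ} (e : Fin m → Fin n) : ℕ :=
  ∑ j : Fin m, width n f ((Iic j).image e) (e j)

lemma orderCost_comp_cast {m m' : ℕ} (h : m = m') (e : Fin m' → Fin n) :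
    orderCost n f (e ∘ Fin.cast h) = orderCost n f e := by
  subst h
  rfl

lemma orderCost_succ {m : ℕ} (e : Fin (m + 1) → Fin n) :
    orderCost n f e =
      orderCost n f (e ∘ Fin.castSucc) + width n f (univ.image e) (e (Fin.last m)) := by
  rw [orderCost, Fin.sum_univ_castSucc, ← Fin.top_eq_last, Iic_top]
  congr 1
  refine sum_congr rfl fun j _ => ?_
  rw [← Fin.finsetImage_castSucc_Iic, image_image]
  rfl

lemma MC_eq_sInf_orderCost (J : Finset (Fin n)) :
    MC n f J = sInf {c | ∃ τ : Fin J.card ≃ J, c = orderCost n f fun j => (τ j : Fin n)} := by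
  simp only [MC, RC, empty_union]
  rfl

variable {n} {I : Finset (Fin n)} {k : Fin n}

lemma exists_orderCost_erase_of_last_eq (hk : k ∈ I) (σ : Fin I.card ≃ I)
    (h : I.card - 1 < I.card) (hσ : (σ ⟨I.card - 1, h⟩ : Fin n) = k) :
    ∃ τ : Fin (I.erase k).card ≃ I.erase k,
      orderCost n f (fun j => (σ j : Fin n)) =
        orderCost n f (fun j => (τ j : Fin n)) + width n f I k := by
  have hm : I.card = (I.erase k).card + 1 := (card_erase_add_one hk).symm
  set e : Fin ((I.erase k).card + 1) → Fin n := fun j => σ (Fin.cast hm.symm j)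
  have he : Function.Injective e :=
    Subtype.val_injective.comp (σ.injective.comp (Fin.cast_injective _))
  have hlast : e (Fin.last _) = k :=
    (congrArg (fun j => (σ j : Fin n))
      (Fin.ext (by simp [hm]) : Fin.cast hm.symm (Fin.last _) = ⟨I.card - 1, h⟩)).trans hσ
  have herase : ∀ j, (e ∘ Fin.castSucc) j ∈ I.erase k := fun j =>
    mem_erase.2 ⟨fun hj => (Fin.castSucc_lt_last j).ne (he (hj.trans hlast.symm)), (σ _).2⟩
  obtain ⟨τ, hτ⟩ := exists_equiv_val_eq _ (he.comp (Fin.castSucc_injective _)) herase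
  refine ⟨τ, ?_⟩
  calc orderCost n f (fun j => (σ j : Fin n)) = orderCost n f e :=
        (orderCost_comp_cast n f hm.symm _).symm
    _ = orderCost n f (e ∘ Fin.castSucc) + width n f I k := by
        rw [orderCost_succ, image_univ_eq_of_injective he (fun j => (σ _).2) hm.le, hlast]
    _ = orderCost n f (fun j => (τ j : Fin n)) + width n f I k := by
        simp only [hτ]

lemma exists_orderCost_eq_of_erase (hk : k ∈ I) (τ : Fin (I.erase k).card ≃ I.erase k)
    (h : I.card - 1 < I.card) :
    ∃ σ : Fin I.card ≃ I, (σ ⟨I.card - 1, h⟩ : Fin n) = k ∧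
      orderCost n f (fun j => (σ j : Fin n)) =
        orderCost n f (fun j => (τ j : Fin n)) + width n f I k := by
  have hm : I.card = (I.erase k).card + 1 := (card_erase_add_one hk).symm
  set e : Fin ((I.erase k).card + 1) → Fin n := Fin.snoc (fun j => (τ j : Fin n)) k
  have he : Function.Injective e := Fin.snoc_injective_of_injective
    (Subtype.val_injective.comp τ.injective) fun ⟨j, hj⟩ => (mem_erase.1 (τ j).2).1 hj
  have hI : ∀ j, e j ∈ I := Fin.lastCases (by simpa [e] using hk)
    fun j => by simpa [e] using mem_of_mem_erase (τ j).2
  obtain ⟨σ, hσ⟩ := exists_equiv_val_eq (e ∘ Fin.cast hm) (he.comp (Fin.cast_injective _))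
    fun j => hI _
  refine ⟨σ, ?_, ?_⟩
  · rw [hσ, Function.comp_apply, show Fin.cast hm ⟨I.card - 1, h⟩ = Fin.last _ from
      Fin.ext (by simp [hm])]
    simp [e]
  calc orderCost n f (fun j => (σ j : Fin n)) = orderCost n f (e ∘ Fin.cast hm) := by
        simp only [hσ]
    _ = orderCost n f e := orderCost_comp_cast n f hm e
    _ = orderCost n f (fun j => (τ j : Fin n)) + width n f I k := by
        rw [orderCost_succ, image_univ_eq_of_injective he hI hm.le]
        simp [e]

end Orderings

/-- The minimum, over orderings `σ` of `I` whose last element is `k`, of the total width cost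
equals `MC(I \ {k}) + w(I, k)`. -/
theorem stmt_1 (n : ℕ) (f : (Fin n → Bool) → Bool) (I : Finset (Fin n)) (k : Fin n)
    (hk : k ∈ I) :
    sInf { c | ∃ σ : Fin I.card ≃ {j // j ∈ I},
        ((σ ⟨I.card - 1, Nat.sub_lt (Finset.card_pos.mpr ⟨k, hk⟩) Nat.one_pos⟩ :
            {j // j ∈ I}) : Fin n) = k ∧
        c = ∑ j : Fin I.card,
              width n f ((Finset.Iic j).image (fun t => ((σ t : {j // j ∈ I}) : Fin n))) (σ j) }
      = MC n f (I.erase k) + width n f I k := by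
  set S := {c | ∃ τ : Fin (I.erase k).card ≃ I.erase k, c = orderCost n f fun j => (τ j : Fin n)}
  have hlast : I.card - 1 < I.card := Nat.sub_lt (card_pos.mpr ⟨k, hk⟩) Nat.one_pos
  suffices hA : {c | ∃ σ : Fin I.card ≃ I, ((σ ⟨I.card - 1, hlast⟩ : I) : Fin n) = k ∧
      c = orderCost n f fun j => (σ j : Fin n)} = (· + width n f I k) '' S by
    have hS : S.Nonempty := ⟨_, (I.erase k).equivFin.symm, rfl⟩
    rw [MC_eq_sInf_orderCost, ← Nat.sInf_image_add_right hS, ← hA]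
    rfl
  ext c
  constructor
  · rintro ⟨σ, hσ, rfl⟩
    obtain ⟨τ, hτ⟩ := exists_orderCost_erase_of_last_eq f hk σ hlast hσ
    exact ⟨_, ⟨τ, rfl⟩, hτ.symm⟩
  · rintro ⟨_, ⟨τ, rfl⟩, rfl⟩
    obtain ⟨σ, hσ, hcost⟩ := exists_orderCost_eq_of_erase f hk τ hlast
    exact ⟨σ, hσ, hcost.symm⟩
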